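/- Any set of n ≥ 3 points in the unit cube [0,1]^3 contains three points forming a triangle of area at most C · n^{-2/3} for an absolute constant C. -/

import Mathlib

open Metric Set

noncomputable section

abbrev E3 := EuclideanSpace ℝ (Fin 3)

def unitCube3 : Set E3 := {x | ∀ i, x i ∈ Icc (0 : ℝ) 1}

def triArea (a b c : E3) : ℝ :=
  (1 / 2) * ‖(EuclideanSpace.equiv (Fin 3) ℝ).symm
      (crossProduct ((EuclideanSpace.equiv (Fin 3) ℝ) (b - a))
        ((EuclideanSpace.equiv (Fin 3) ℝ) (c - a)))‖

/-!
Choose `k` with `2 k³ < n ≤ 24 k³` and cut `[0,1]³` into `k³` subcubes of side `1 / k`.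
By pigeonhole some subcube holds three of the points; they are pairwise at distance at most
`√3 / k`, and by Lagrange's identity `‖u × w‖ ≤ ‖u‖ ‖w‖` the triangle they span has area at most
`3 / (2 k²) ≤ (27 / 2) n^{-2/3}`.
-/

open Finset

lemma EuclideanSpace.norm_sq_eq_dotProduct {ι : Type*} [Fintype ι] (v : EuclideanSpace ℝ ι) :
    ‖v‖ ^ 2 = EuclideanSpace.equiv ι ℝ v ⬝ᵥ EuclideanSpace.equiv ι ℝ v := by
  rw [← real_inner_self_eq_norm_sq, EuclideanSpace.inner_eq_star_dotProduct]
  rfl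

lemma norm_crossProduct_le (u w : Fin 3 → ℝ) :
    ‖(EuclideanSpace.equiv (Fin 3) ℝ).symm (crossProduct u w)‖ ≤
      ‖(EuclideanSpace.equiv (Fin 3) ℝ).symm u‖ * ‖(EuclideanSpace.equiv (Fin 3) ℝ).symm w‖ := by
  rw [← pow_le_pow_iff_left₀ (norm_nonneg _) (by positivity) two_ne_zero, mul_pow]
  simp only [EuclideanSpace.norm_sq_eq_dotProduct, ContinuousLinearEquiv.apply_symm_apply]
  rw [cross_dot_cross, dotProduct_comm w u]
  nlinarith [sq_nonneg (u ⬝ᵥ w)]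

lemma triArea_le_dist_mul_dist (a b c : E3) : triArea a b c ≤ dist a b * dist a c / 2 := by
  have h := norm_crossProduct_le (EuclideanSpace.equiv (Fin 3) ℝ (b - a))
    (EuclideanSpace.equiv (Fin 3) ℝ (c - a))
  simp only [ContinuousLinearEquiv.symm_apply_apply] at h
  rw [triArea, dist_comm a b, dist_comm a c, dist_eq_norm, dist_eq_norm]
  linarith

/-- The cell `[j / k, (j + 1) / k)` of `[0, 1]` containing `x`; the clamp puts `x = 1` into the
last cell `j = k - 1`. -/
def gridIndex (k : ℕ) (x : ℝ) : ℕ := min ⌊k * x⌋₊ (k - 1)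

section gridIndex

variable {k : ℕ} {x y : ℝ}

lemma gridIndex_lt (hk : 0 < k) (x : ℝ) : gridIndex k x < k := by
  unfold gridIndex; omega

lemma gridIndex_le_mul (hx : 0 ≤ x) : (gridIndex k x : ℝ) ≤ k * x :=
  (Nat.cast_le.2 (min_le_left _ _)).trans (Nat.floor_le (by positivity))

lemma mul_le_gridIndex_add_one (hk : 0 < k) (hx : x ≤ 1) : k * x ≤ gridIndex k x + 1 := by
  rcases le_total ⌊(k : ℝ) * x⌋₊ (k - 1) with h | h
  · rw [gridIndex, min_eq_left h]
    exact (Nat.lt_floor_add_one _).le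
  · rw [gridIndex, min_eq_right h, Nat.cast_sub hk, Nat.cast_one, sub_add_cancel]
    exact mul_le_of_le_one_right k.cast_nonneg hx

lemma abs_sub_le_of_gridIndex_eq (hk : 0 < k) (hx : x ∈ Icc (0 : ℝ) 1)
    (hy : y ∈ Icc (0 : ℝ) 1) (h : gridIndex k x = gridIndex k y) : |x - y| ≤ 1 / k := by
  have hk' : (0 : ℝ) < k := Nat.cast_pos.2 hk
  have hx₁ := gridIndex_le_mul (k := k) hx.1
  have hx₂ := mul_le_gridIndex_add_one hk hx.2
  have hy₁ := gridIndex_le_mul (k := k) hy.1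
  have hy₂ := mul_le_gridIndex_add_one hk hy.2
  rw [h] at hx₁ hx₂
  rw [abs_sub_le_iff, le_div_iff₀ hk', le_div_iff₀ hk']
  constructor <;> linarith

end gridIndex

lemma dist_le_of_gridIndex_eq {ι : Type*} [Fintype ι] {k : ℕ} (hk : 0 < k)
    {x y : EuclideanSpace ℝ ι} (hx : ∀ i, x i ∈ Icc (0 : ℝ) 1) (hy : ∀ i, y i ∈ Icc (0 : ℝ) 1)
    (h : ∀ i, gridIndex k (x i) = gridIndex k (y i)) :
    dist x y ≤ √(Fintype.card ι) / k := by
  have hsum : ∑ i, dist (x i) (y i) ^ 2 ≤ Fintype.card ι * (1 / k) ^ 2 := by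
    simpa using Finset.sum_le_card_nsmul univ _ _ fun i _ => pow_le_pow_left₀ dist_nonneg
      ((Real.dist_eq _ _).trans_le (abs_sub_le_of_gridIndex_eq hk (hx i) (hy i) (h i))) 2
  rw [EuclideanSpace.dist_eq]
  calc √(∑ i, dist (x i) (y i) ^ 2) ≤ √(Fintype.card ι * (1 / k) ^ 2) := Real.sqrt_le_sqrt hsum
    _ = √(Fintype.card ι) / k := by
      rw [Real.sqrt_mul (Nat.cast_nonneg _), Real.sqrt_sq (by positivity), mul_one_div]

lemma Finset.exists_three_eq_of_mul_two_lt_card {α β : Type*} [DecidableEq β] {s : Finset α}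
    {t : Finset β} {f : α → β} (hf : ∀ a ∈ s, f a ∈ t) (hst : #t * 2 < #s) :
    ∃ a ∈ s, ∃ b ∈ s, ∃ c ∈ s, a ≠ b ∧ a ≠ c ∧ b ≠ c ∧ f a = f b ∧ f a = f c := by
  obtain ⟨y, -, hy⟩ := exists_lt_card_fiber_of_mul_lt_card_of_maps_to hf hst
  obtain ⟨a, ha, b, hb, c, hc, hab, hac, hbc⟩ := Finset.two_lt_card.1 hy
  simp only [mem_filter] at ha hb hc
  exact ⟨a, ha.1, b, hb.1, c, hc.1, hab, hac, hbc, ha.2.trans hb.2.symm, ha.2.trans hc.2.symm⟩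

lemma exists_three_dist_le_of_mem_unitCube {ι : Type*} [Fintype ι] [DecidableEq ι] {k : ℕ}
    (hk : 0 < k) (P : Finset (EuclideanSpace ℝ ι)) (hP : ∀ p ∈ P, ∀ i, p i ∈ Icc (0 : ℝ) 1)
    (hcard : k ^ Fintype.card ι * 2 < #P) :
    ∃ a ∈ P, ∃ b ∈ P, ∃ c ∈ P, a ≠ b ∧ a ≠ c ∧ b ≠ c ∧
      dist a b ≤ √(Fintype.card ι) / k ∧ dist a c ≤ √(Fintype.card ι) / k := by
  have hmaps : ∀ p ∈ P,
      (fun i => gridIndex k (p i)) ∈ Fintype.piFinset fun _ : ι => range k :=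
    fun p _ => Fintype.mem_piFinset.2 fun i => mem_range.2 (gridIndex_lt hk _)
  obtain ⟨a, ha, b, hb, c, hc, hab, hac, hbc, hfab, hfac⟩ :=
    exists_three_eq_of_mul_two_lt_card hmaps (by simpa using hcard)
  exact ⟨a, ha, b, hb, c, hc, hab, hac, hbc,
    dist_le_of_gridIndex_eq hk (hP a ha) (hP b hb) (congrFun hfab),
    dist_le_of_gridIndex_eq hk (hP a ha) (hP c hc) (congrFun hfac)⟩

lemma exists_pow_three_between {n : ℕ} (hn : 3 ≤ n) :
    ∃ k, 0 < k ∧ k ^ 3 * 2 < n ∧ n ≤ 24 * k ^ 3 := by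
  set k := Nat.findGreatest (fun k => 3 * k ^ 3 ≤ n) n
  have hk : 0 < k :=
    Nat.le_findGreatest (P := fun k => 3 * k ^ 3 ≤ n) (by omega) (by simpa using hn)
  have hk3 : 3 * k ^ 3 ≤ n :=
    Nat.findGreatest_spec (P := fun k => 3 * k ^ 3 ≤ n) (m := 1) (by omega) (by simpa using hn)
  have hk3' : n < 3 * (k + 1) ^ 3 := by
    by_cases hkn : k + 1 ≤ n
    · exact not_le.1 (Nat.findGreatest_is_greatest (P := fun k => 3 * k ^ 3 ≤ n)
        (Nat.lt_succ_self k) hkn)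
    · nlinarith [Nat.le_self_pow three_ne_zero (k + 1)]
  refine ⟨k, hk, by nlinarith, ?_⟩
  nlinarith [pow_le_pow_left₀ (Nat.zero_le _) (show k + 1 ≤ 2 * k by omega) 3]

lemma one_div_sq_le_mul_rpow_neg_two_thirds {n k : ℝ} (hn : 0 < n) (hk : 0 < k)
    (h : n ≤ 27 * k ^ 3) : 1 / k ^ 2 ≤ 9 * n ^ (-(2 : ℝ) / 3) := by
  set t := n ^ ((1 : ℝ) / 3)
  have ht : 0 < t := Real.rpow_pos_of_pos hn _
  have ht3 : t ^ 3 = n := by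
    rw [← Real.rpow_natCast, ← Real.rpow_mul hn.le]; norm_num
  have hrw : n ^ (-(2 : ℝ) / 3) = 1 / t ^ 2 := by
    rw [← Real.rpow_natCast, ← Real.rpow_mul hn.le, one_div, ← Real.rpow_neg hn.le]; norm_num
  have htk : t ≤ 3 * k :=
    (pow_le_pow_iff_left₀ ht.le (by positivity) three_ne_zero).1 (by rw [ht3]; linarith)
  rw [hrw, mul_one_div, div_le_div_iff₀ (by positivity) (by positivity)]
  nlinarith

/-- Any `n ≥ 3` points in `[0,1]³` contain three points spanning a triangle
of area at most `C · n^{-2/3}` for an absolute constant `C`. -/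
theorem stmt2 :
    ∃ C > 0, ∀ (n : ℕ), 3 ≤ n → ∀ P : Finset E3, P.card = n →
      (∀ p ∈ P, p ∈ unitCube3) →
      ∃ a ∈ P, ∃ b ∈ P, ∃ c ∈ P, a ≠ b ∧ a ≠ c ∧ b ≠ c ∧
        triArea a b c ≤ C * (n : ℝ) ^ (-(2 : ℝ) / 3) := by
  refine ⟨27 / 2, by norm_num, fun n hn P hcard hP => ?_⟩
  obtain ⟨k, hk, hkn, hnk⟩ := exists_pow_three_between hn
  obtain ⟨a, ha, b, hb, c, hc, hab, hac, hbc, hdab, hdac⟩ :=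
    exists_three_dist_le_of_mem_unitCube hk P hP (by simpa [hcard] using hkn)
  refine ⟨a, ha, b, hb, c, hc, hab, hac, hbc, ?_⟩
  simp only [Fintype.card_fin, Nat.cast_ofNat] at hdab hdac
  have hk' : (0 : ℝ) < k := Nat.cast_pos.2 hk
  have hrpow : 1 / (k : ℝ) ^ 2 ≤ 9 * (n : ℝ) ^ (-(2 : ℝ) / 3) :=
    one_div_sq_le_mul_rpow_neg_two_thirds (by positivity) hk'
      (by exact_mod_cast (by omega : n ≤ 27 * k ^ 3))
  calc triArea a b c ≤ dist a b * dist a c / 2 := triArea_le_dist_mul_dist a b c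
    _ ≤ (√3 / k) * (√3 / k) / 2 := by gcongr
    _ = 3 / 2 * (1 / k ^ 2) := by field_simp; norm_num
    _ ≤ 27 / 2 * (n : ℝ) ^ (-(2 : ℝ) / 3) := by linarith
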